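/- For each integer ℓ ≥ 2, the set V̄_ℓ ∩ [0, F_{ℓ+3}] consists exactly of the 7 numbers F_ℓ < F_{ℓ+1} < F_{ℓ+1}+F_{ℓ−1} < F_{ℓ+2} < F_{ℓ+2}+F_{ℓ−2} < F_{ℓ+2}+F_ℓ < F_{ℓ+3}. -/
import Mathlib


noncomputable section

/-- `F i` is the Fibonacci number `F_i` of the paper (`F_0 = 1`, `F_1 = 1`, `F_2 = 2`, ...). -/
def F (i : ℕ) : ℕ := Nat.fib (i + 1)

/-- `x` belongs to the set `F̄ = {0,1,2,3,5,8,...}` of all Fibonacci numbers (including `0`). -/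
def IsFib (x : ℕ) : Prop := ∃ i : ℕ, Nat.fib i = x

open scoped Classical in
/-- The map `ῑ : ℕ → ℕ`: `ῑ(x) = x` if `x ∈ F̄`, and `ῑ(x) = x - 2 F_{i-2}`
if `F_i < x < F_{i+1}` for the (unique) integer `i ≥ 3`. -/
noncomputable def iotaBar (x : ℕ) : ℕ :=
  if IsFib x then x
  else x - 2 * F (sInf {i : ℕ | x < F (i + 1)} - 2)

/-- `ᾱ(x)` is the eventual constant value of the iterates of `ῑ` at `x`
(the iterates stabilize after at most `x` steps). -/
noncomputable def alphaBar (x : ℕ) : ℕ := iotaBar^[x] x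

/-- `V̄_ℓ = {x ∈ ℕ : ᾱ(x) ≥ F_ℓ}`. -/
def VBar (ℓ : ℕ) : Set ℕ := {x : ℕ | F ℓ ≤ alphaBar x}

/-- `x < y` are consecutive elements of `S`. -/
def ConsecIn (S : Set ℕ) (x y : ℕ) : Prop :=
  x ∈ S ∧ y ∈ S ∧ x < y ∧ ∀ z ∈ S, ¬(x < z ∧ z < y)

lemma F_rec (i : ℕ) : F (i + 2) = F (i + 1) + F i := by
  show Nat.fib (i + 3) = Nat.fib (i + 2) + Nat.fib (i + 1)
  rw [Nat.fib_add_two]; ring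

lemma F_pos (i : ℕ) : 0 < F i := Nat.fib_pos.2 (by omega)

lemma isFib_F (i : ℕ) : IsFib (F i) := ⟨i + 1, rfl⟩

lemma F_mono : Monotone F := fun a b h => Nat.fib_mono (by omega)

lemma F_lt_succ {k : ℕ} (hk : 1 ≤ k) : F k < F (k + 1) :=
  Nat.fib_lt_fib_succ (by omega)

lemma not_isFib {i x : ℕ} (h1 : F i < x) (h2 : x < F (i + 1)) : ¬ IsFib x := by
  rintro ⟨j, rfl⟩
  have e1 : F i = Nat.fib (i + 1) := rfl
  have e2 : F (i + 1) = Nat.fib (i + 2) := rfl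
  have hj : i + 2 ≤ j := by
    by_contra h
    have : Nat.fib j ≤ Nat.fib (i + 1) := Nat.fib_mono (by omega)
    omega
  have : Nat.fib (i + 2) ≤ Nat.fib j := Nat.fib_mono hj
  omega

lemma sInf_eq {i x : ℕ} (h1 : F i ≤ x) (h2 : x < F (i + 1)) :
    sInf {j : ℕ | x < F (j + 1)} = i := by
  apply le_antisymm
  · exact Nat.sInf_le h2
  · by_contra h
    push_neg at h
    have hmem : sInf {j : ℕ | x < F (j + 1)} ∈ {j : ℕ | x < F (j + 1)} :=
      Nat.sInf_mem ⟨i, h2⟩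
    simp only [Set.mem_setOf_eq] at hmem
    have : F (sInf {j : ℕ | x < F (j + 1)} + 1) ≤ F i := F_mono (by omega)
    omega

lemma iotaBar_eq {i x : ℕ} (h1 : F i < x) (h2 : x < F (i + 1)) :
    iotaBar x = x - 2 * F (i - 2) := by
  rw [iotaBar, if_neg (not_isFib h1 h2), sInf_eq h1.le h2]

lemma iotaBar_fib {x : ℕ} (h : IsFib x) : iotaBar x = x := by
  rw [iotaBar, if_pos h]

lemma iotaBar_lt {x : ℕ} (h : ¬ IsFib x) : iotaBar x < x := by
  rw [iotaBar, if_neg h]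
  have hx : x ≠ 0 := by rintro rfl; exact h ⟨0, rfl⟩
  have := F_pos (sInf {i : ℕ | x < F (i + 1)} - 2)
  omega

lemma iter_stable : ∀ x n : ℕ, x ≤ n → iotaBar^[n] x = iotaBar^[x] x := by
  intro x
  induction x using Nat.strong_induction_on with
  | _ x ih =>
    intro n hn
    by_cases h : IsFib x
    · rw [Function.iterate_fixed (iotaBar_fib h), Function.iterate_fixed (iotaBar_fib h)]
    · have hlt : iotaBar x < x := iotaBar_lt h
      obtain ⟨m, rfl⟩ : ∃ m, x = m + 1 := ⟨x - 1, by omega⟩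
      obtain ⟨k, rfl⟩ : ∃ k, n = k + 1 := ⟨n - 1, by omega⟩
      rw [Function.iterate_succ_apply, Function.iterate_succ_apply,
        ih (iotaBar (m + 1)) hlt k (by omega), ih (iotaBar (m + 1)) hlt m (by omega)]

lemma alphaBar_fib {x : ℕ} (h : IsFib x) : alphaBar x = x := by
  unfold alphaBar; rw [Function.iterate_fixed (iotaBar_fib h)]

lemma alphaBar_iota (x : ℕ) : alphaBar (iotaBar x) = alphaBar x := by
  by_cases h : IsFib x
  · rw [iotaBar_fib h]
  · have hlt := iotaBar_lt h
    obtain ⟨m, rfl⟩ : ∃ m, x = m + 1 := ⟨x - 1, by omega⟩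
    show iotaBar^[iotaBar (m + 1)] (iotaBar (m + 1)) = iotaBar^[m + 1] (m + 1)
    rw [Function.iterate_succ_apply, iter_stable (iotaBar (m + 1)) m (by omega)]

lemma isFib_alphaBar : ∀ x : ℕ, IsFib (alphaBar x) := by
  intro x
  induction x using Nat.strong_induction_on with
  | _ x ih =>
    by_cases h : IsFib x
    · rw [alphaBar_fib h]; exact h
    · rw [← alphaBar_iota x]; exact ih _ (iotaBar_lt h)

lemma alphaBar_le : ∀ x : ℕ, alphaBar x ≤ x := by
  intro x
  induction x using Nat.strong_induction_on with
  | _ x ih =>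
    by_cases h : IsFib x
    · rw [alphaBar_fib h]
    · have hlt := iotaBar_lt h
      rw [← alphaBar_iota x]
      exact le_trans (ih _ hlt) hlt.le

lemma alpha_step {i x : ℕ} (h1 : F i < x) (h2 : x < F (i + 1)) :
    alphaBar x = alphaBar (x - 2 * F (i - 2)) := by
  rw [← alphaBar_iota x, iotaBar_eq h1 h2]
lemma F0 : F 0 = 1 := by decide
lemma F1 : F 1 = 1 := by decide
lemma F2 : F 2 = 2 := by decide
lemma F3 : F 3 = 3 := by decide
lemma F4 : F 4 = 5 := by decide
lemma F5 : F 5 = 8 := by decide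
lemma F6 : F 6 = 13 := by decide

lemma isFib2 : IsFib 2 := ⟨3, rfl⟩
lemma isFib3 : IsFib 3 := ⟨4, rfl⟩
lemma isFib5 : IsFib 5 := ⟨5, rfl⟩

lemma alpha4 : alphaBar 4 = 2 := by
  have h := alpha_step (i := 3) (x := 4) (by decide) (by decide)
  rw [show (4 : ℕ) - 2 * F (3 - 2) = 2 by decide] at h
  rw [h, alphaBar_fib isFib2]

lemma alpha6 : alphaBar 6 = 2 := by
  have h := alpha_step (i := 4) (x := 6) (by decide) (by decide)
  rw [show (6 : ℕ) - 2 * F (4 - 2) = 2 by decide] at h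
  rw [h, alphaBar_fib isFib2]

lemma alpha7 : alphaBar 7 = 3 := by
  have h := alpha_step (i := 4) (x := 7) (by decide) (by decide)
  rw [show (7 : ℕ) - 2 * F (4 - 2) = 3 by decide] at h
  rw [h, alphaBar_fib isFib3]

lemma alpha9 : alphaBar 9 = 3 := by
  have h := alpha_step (i := 5) (x := 9) (by decide) (by decide)
  rw [show (9 : ℕ) - 2 * F (5 - 2) = 3 by decide] at h
  rw [h, alphaBar_fib isFib3]

lemma alpha10 : alphaBar 10 = 2 := by
  have h := alpha_step (i := 5) (x := 10) (by decide) (by decide)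
  rw [show (10 : ℕ) - 2 * F (5 - 2) = 4 by decide] at h
  rw [h, alpha4]

lemma alpha11 : alphaBar 11 = 5 := by
  have h := alpha_step (i := 5) (x := 11) (by decide) (by decide)
  rw [show (11 : ℕ) - 2 * F (5 - 2) = 5 by decide] at h
  rw [h, alphaBar_fib isFib5]

lemma alpha12 : alphaBar 12 = 2 := by
  have h := alpha_step (i := 5) (x := 12) (by decide) (by decide)
  rw [show (12 : ℕ) - 2 * F (5 - 2) = 6 by decide] at h
  rw [h, alpha6]
lemma main : ∀ x : ℕ, ∀ i : ℕ, 3 ≤ i → F i < x → x < F (i + 1) →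
    (x = F i + F (i - 2) ∧ alphaBar x = F (i - 1)) ∨
    (x = F i + F (i - 4) ∧ alphaBar x = F (i - 2)) ∨
    alphaBar x < F (i - 2) := by
  intro x
  induction x using Nat.strong_induction_on with
  | _ x ih =>
  intro i hi h1 h2
  rcases Nat.lt_or_ge i 6 with h6 | h6
  · interval_cases i
    · -- i = 3
      have h1' : 3 < x := by rwa [F3] at h1
      have h2' : x < 5 := by rwa [show F (3 + 1) = 5 by decide] at h2
      have hx : x = 4 := by omega
      subst hx
      exact Or.inl ⟨by decide, by rw [alpha4]; decide⟩
    · -- i = 4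
      have h1' : 5 < x := by rwa [F4] at h1
      have h2' : x < 8 := by rwa [show F (4 + 1) = 8 by decide] at h2
      interval_cases x
      · exact Or.inr (Or.inl ⟨by decide, by rw [alpha6]; decide⟩)
      · exact Or.inl ⟨by decide, by rw [alpha7]; decide⟩
    · -- i = 5
      have h1' : 8 < x := by rwa [F5] at h1
      have h2' : x < 13 := by rwa [show F (5 + 1) = 13 by decide] at h2
      interval_cases x
      · exact Or.inr (Or.inl ⟨by decide, by rw [alpha9]; decide⟩)
      · exact Or.inr (Or.inr (by rw [alpha10]; decide))
      · exact Or.inl ⟨by decide, by rw [alpha11]; decide⟩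
      · exact Or.inr (Or.inr (by rw [alpha12]; decide))
  · obtain ⟨j, rfl⟩ : ∃ j, i = j + 6 := ⟨i - 6, by omega⟩
    have r0 : F (j + 2) = F (j + 1) + F j := F_rec j
    have r1 : F (j + 3) = F (j + 2) + F (j + 1) := F_rec (j + 1)
    have r2 : F (j + 4) = F (j + 3) + F (j + 2) := F_rec (j + 2)
    have r3 : F (j + 5) = F (j + 4) + F (j + 3) := F_rec (j + 3)
    have r4 : F (j + 6) = F (j + 5) + F (j + 4) := F_rec (j + 4)
    have r5 : F (j + 7) = F (j + 6) + F (j + 5) := F_rec (j + 5)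
    have p0 := F_pos j
    have p1 := F_pos (j + 1)
    have p2 := F_pos (j + 2)
    have p3 := F_pos (j + 3)
    have p4 := F_pos (j + 4)
    have h2' : x < F (j + 7) := h2
    have hy : iotaBar x = x - 2 * F (j + 6 - 2) := iotaBar_eq h1 h2
    rw [show j + 6 - 2 = j + 4 by omega] at hy
    have ha : alphaBar x = alphaBar (x - 2 * F (j + 4)) := by
      rw [← alphaBar_iota x, hy]
    set y := x - 2 * F (j + 4) with hydef
    have hx2 : x = y + 2 * F (j + 4) := by omega
    have hyl : F (j + 3) < y := by omega
    have hyu : y < F (j + 5) + F (j + 3) := by omega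
    rcases lt_trichotomy y (F (j + 4)) with hc | hc | hc
    · have := ih y (by omega) (j + 3) (by omega) hyl hc
      rw [show j + 3 - 2 = j + 1 by omega, show j + 3 - 1 = j + 2 by omega] at this
      right; right
      rw [show j + 6 - 2 = j + 4 by omega, ha]
      rcases this with ⟨_, h⟩ | ⟨_, h⟩ | h <;> omega
    · right; left
      rw [show j + 6 - 2 = j + 4 by omega, show j + 6 - 4 = j + 2 by omega]
      exact ⟨by omega, by rw [ha, hc, alphaBar_fib (isFib_F (j + 4))]⟩
    · rcases lt_trichotomy y (F (j + 5)) with hd | hd | hd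
      · have := ih y (by omega) (j + 4) (by omega) hc hd
        rw [show j + 4 - 2 = j + 2 by omega, show j + 4 - 1 = j + 3 by omega] at this
        right; right
        rw [show j + 6 - 2 = j + 4 by omega, ha]
        rcases this with ⟨_, h⟩ | ⟨_, h⟩ | h <;> omega
      · left
        rw [show j + 6 - 2 = j + 4 by omega, show j + 6 - 1 = j + 5 by omega]
        exact ⟨by omega, by rw [ha, hd, alphaBar_fib (isFib_F (j + 5))]⟩
      · have h6' : y < F (j + 6) := by omega
        have := ih y (by omega) (j + 5) (by omega) hd h6'
        rw [show j + 5 - 2 = j + 3 by omega, show j + 5 - 1 = j + 4 by omega,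
          show j + 5 - 4 = j + 1 by omega] at this
        right; right
        rw [show j + 6 - 2 = j + 4 by omega, ha]
        rcases this with ⟨hE, h⟩ | ⟨_, h⟩ | h <;> omega
lemma alpha_lt {x i : ℕ} (hi : 2 ≤ i) (h1 : F i < x) (h2 : x < F (i + 1)) :
    alphaBar x < F i := by
  rcases eq_or_lt_of_le hi with h | h
  · exfalso
    subst h
    rw [F2] at h1
    rw [show F (2 + 1) = 3 by decide] at h2
    omega
  · have hm := main x i (by omega) h1 h2
    have e1 : F (i - 1) < F i := by
      have := F_lt_succ (k := i - 1) (by omega)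
      rwa [show i - 1 + 1 = i by omega] at this
    have e2 : F (i - 2) ≤ F (i - 1) := F_mono (by omega)
    rcases hm with ⟨_, h⟩ | ⟨_, h⟩ | h <;> omega

lemma alpha_A {ℓ : ℕ} (hℓ : 2 ≤ ℓ) : alphaBar (F (ℓ + 1) + F (ℓ - 1)) = F ℓ := by
  obtain ⟨m, rfl⟩ : ∃ m, ℓ = m + 2 := ⟨ℓ - 2, by omega⟩
  rw [show m + 2 - 1 = m + 1 by omega]
  have r0 : F (m + 2) = F (m + 1) + F m := F_rec m
  have r1 : F (m + 3) = F (m + 2) + F (m + 1) := F_rec (m + 1)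
  have r2 : F (m + 4) = F (m + 3) + F (m + 2) := F_rec (m + 2)
  have p0 := F_pos m
  have p1 := F_pos (m + 1)
  have h1 : F (m + 3) < F (m + 3) + F (m + 1) := by omega
  have h2 : F (m + 3) + F (m + 1) < F (m + 4) := by omega
  have h := alpha_step (i := m + 3) h1 h2
  rw [show m + 3 - 2 = m + 1 by omega,
    show F (m + 3) + F (m + 1) - 2 * F (m + 1) = F (m + 2) by omega] at h
  rw [show m + 2 + 1 = m + 3 by omega] at h
  rw [h, alphaBar_fib (isFib_F (m + 2))]

lemma alpha_B {ℓ : ℕ} (hℓ : 2 ≤ ℓ) : alphaBar (F (ℓ + 2) + F (ℓ - 2)) = F ℓ := by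
  obtain ⟨m, rfl⟩ : ∃ m, ℓ = m + 2 := ⟨ℓ - 2, by omega⟩
  rw [show m + 2 - 2 = m by omega]
  have r0 : F (m + 2) = F (m + 1) + F m := F_rec m
  have r1 : F (m + 3) = F (m + 2) + F (m + 1) := F_rec (m + 1)
  have r2 : F (m + 4) = F (m + 3) + F (m + 2) := F_rec (m + 2)
  have r3 : F (m + 5) = F (m + 4) + F (m + 3) := F_rec (m + 3)
  have p0 := F_pos m
  have p1 := F_pos (m + 1)
  have p2 := F_pos (m + 2)
  have h1 : F (m + 4) < F (m + 4) + F m := by omega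
  have h2 : F (m + 4) + F m < F (m + 5) := by omega
  have h := alpha_step (i := m + 4) h1 h2
  rw [show m + 4 - 2 = m + 2 by omega,
    show F (m + 4) + F m - 2 * F (m + 2) = F (m + 2) by omega] at h
  rw [show m + 2 + 2 = m + 4 by omega] at h
  rw [h, alphaBar_fib (isFib_F (m + 2))]

lemma alpha_C {ℓ : ℕ} (hℓ : 2 ≤ ℓ) : alphaBar (F (ℓ + 2) + F ℓ) = F (ℓ + 1) := by
  obtain ⟨m, rfl⟩ : ∃ m, ℓ = m + 2 := ⟨ℓ - 2, by omega⟩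
  have r0 : F (m + 2) = F (m + 1) + F m := F_rec m
  have r1 : F (m + 3) = F (m + 2) + F (m + 1) := F_rec (m + 1)
  have r2 : F (m + 4) = F (m + 3) + F (m + 2) := F_rec (m + 2)
  have r3 : F (m + 5) = F (m + 4) + F (m + 3) := F_rec (m + 3)
  have p0 := F_pos m
  have p1 := F_pos (m + 1)
  have p2 := F_pos (m + 2)
  have h1 : F (m + 4) < F (m + 4) + F (m + 2) := by omega
  have h2 : F (m + 4) + F (m + 2) < F (m + 5) := by omega
  have h := alpha_step (i := m + 4) h1 h2
  rw [show m + 4 - 2 = m + 2 by omega,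
    show F (m + 4) + F (m + 2) - 2 * F (m + 2) = F (m + 3) by omega] at h
  rw [show m + 2 + 2 = m + 4 by omega, show m + 2 + 1 = m + 3 by omega] at h ⊢
  rw [h, alphaBar_fib (isFib_F (m + 3))]
theorem VBar_initial_segment (ℓ : ℕ) (hℓ : 2 ≤ ℓ) :
    VBar ℓ ∩ Set.Icc 0 (F (ℓ + 3)) =
      {F ℓ, F (ℓ + 1), F (ℓ + 1) + F (ℓ - 1), F (ℓ + 2), F (ℓ + 2) + F (ℓ - 2),
        F (ℓ + 2) + F ℓ, F (ℓ + 3)} ∧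
    F ℓ < F (ℓ + 1) ∧ F (ℓ + 1) < F (ℓ + 1) + F (ℓ - 1) ∧
    F (ℓ + 1) + F (ℓ - 1) < F (ℓ + 2) ∧ F (ℓ + 2) < F (ℓ + 2) + F (ℓ - 2) ∧
    F (ℓ + 2) + F (ℓ - 2) < F (ℓ + 2) + F ℓ ∧ F (ℓ + 2) + F ℓ < F (ℓ + 3) := by
  have r0 : F (ℓ - 2 + 2) = F (ℓ - 2 + 1) + F (ℓ - 2) := F_rec (ℓ - 2)
  rw [show ℓ - 2 + 2 = ℓ by omega, show ℓ - 2 + 1 = ℓ - 1 by omega] at r0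
  have r1 : F (ℓ + 1) = F ℓ + F (ℓ - 1) := by
    have := F_rec (ℓ - 1)
    rwa [show ℓ - 1 + 2 = ℓ + 1 by omega, show ℓ - 1 + 1 = ℓ by omega] at this
  have r2 : F (ℓ + 2) = F (ℓ + 1) + F ℓ := F_rec ℓ
  have r3 : F (ℓ + 3) = F (ℓ + 2) + F (ℓ + 1) := F_rec (ℓ + 1)
  have pm2 := F_pos (ℓ - 2)
  have pm1 := F_pos (ℓ - 1)
  have p0 := F_pos ℓ
  have em1 : F (ℓ - 1) < F ℓ := by
    have := F_lt_succ (k := ℓ - 1) (by omega)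
    rwa [show ℓ - 1 + 1 = ℓ by omega] at this
  have em2 : F (ℓ - 2) ≤ F (ℓ - 1) := F_mono (by omega)
  refine ⟨?_, by omega, by omega, by omega, by omega, by omega, by omega⟩
  ext x
  simp only [Set.mem_inter_iff, Set.mem_Icc, Set.mem_setOf_eq, Set.mem_insert_iff,
    Set.mem_singleton_iff, VBar]
  constructor
  · rintro ⟨hv, -, hub⟩
    rcases le_or_gt x (F ℓ) with h | h
    · have := alphaBar_le x
      left; omega
    rcases lt_trichotomy x (F (ℓ + 1)) with h1 | h1 | h1
    · exfalso
      have := alpha_lt hℓ h h1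
      omega
    · right; left; omega
    rcases lt_trichotomy x (F (ℓ + 2)) with h2 | h2 | h2
    · have hm := main x (ℓ + 1) (by omega) h1 h2
      rw [show ℓ + 1 - 1 = ℓ by omega, show ℓ + 1 - 2 = ℓ - 1 by omega] at hm
      rcases hm with ⟨hx, _⟩ | ⟨_, hA⟩ | hA
      · right; right; left; exact hx
      · exfalso; omega
      · exfalso; omega
    · right; right; right; left; omega
    rcases eq_or_lt_of_le hub with h3 | h3
    · right; right; right; right; right; right; exact h3
    have hm := main x (ℓ + 2) (by omega) h2 h3
    rw [show ℓ + 2 - 1 = ℓ + 1 by omega, show ℓ + 2 - 2 = ℓ by omega,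
      show ℓ + 2 - 4 = ℓ - 2 by omega] at hm
    rcases hm with ⟨hx, _⟩ | ⟨hx, _⟩ | hA
    · right; right; right; right; right; left; exact hx
    · right; right; right; right; left; exact hx
    · exfalso; omega
  · have mono1 : F ℓ ≤ F (ℓ + 1) := F_mono (by omega)
    rintro (rfl | rfl | rfl | rfl | rfl | rfl | rfl)
    · rw [alphaBar_fib (isFib_F ℓ)]
      omega
    · rw [alphaBar_fib (isFib_F (ℓ + 1))]
      omega
    · rw [alpha_A hℓ]
      omega
    · rw [alphaBar_fib (isFib_F (ℓ + 2))]
      omega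
    · rw [alpha_B hℓ]
      omega
    · rw [alpha_C hℓ]
      omega
    · rw [alphaBar_fib (isFib_F (ℓ + 3))]
      omega
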